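/- arXiv:2503.05036 — 4 statements merged into one kernel-verified Lean document; each statement's English description precedes it below -/
import Mathlib

section
/- For all nonzero vectors a, b in H with ⟨a,b⟩ = 0 and all q ∈ [0,1], the q-numerical radius of a⊗b satisfies ω_q(a⊗b) = ((1 + √(1−q²))/2)·‖a‖·‖b‖. -/
/-!
Normalise `a` and `b` to an orthonormal pair `e₁, e₂`; then
`|⟨(a ⊗ b) x, y⟩| = ‖a‖ ‖b‖ |⟨x, e₁⟩| |⟨y, e₂⟩|`.

Upper bound: write `y = ⟨y, x⟩ x + r` with `r ⊥ x` and `‖r‖ = √(1 - q²)`, and put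
`s = |⟨x, e₂⟩|`. Projecting `e₂` off `x` gives `|⟨y, e₂⟩| ≤ q s + √(1 - q²) √(1 - s²)`, and Bessel's
inequality for `e₁, e₂` gives `|⟨x, e₁⟩| ≤ √(1 - s²)`. With `s = sin θ`, `q = cos φ` the product
of the two bounds is `cos θ sin (θ + φ) ≤ (1 + sin φ) / 2`.

Equality: take `x = cos θ e₁ + sin θ e₂` with `2θ + φ = π/2` and `y` its rotation by `φ` in the
plane spanned by `e₁, e₂`.
-/

open scoped ComplexInnerProductSpace

/-- The rank-one operator `a ⊗ b` on a complex Hilbert space, acting by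
`(a ⊗ b) x = ⟨x, a⟩ · b` (i.e. `x ↦ ⟪a, x⟫ • b` in Mathlib's convention, where the
inner product is conjugate-linear in the first slot). -/
noncomputable def rankOne {H : Type*} [NormedAddCommGroup H] [InnerProductSpace ℂ H]
    (a b : H) : H →L[ℂ] H :=
  (innerSL ℂ a).smulRight b

/-- The `q`-numerical radius `ω_q(A) = sup { |⟨Ax, y⟩| : ‖x‖ = ‖y‖ = 1, ⟨x, y⟩ = q }`. -/
noncomputable def qRad {H : Type*} [NormedAddCommGroup H] [InnerProductSpace ℂ H]
    (q : ℝ) (A : H →L[ℂ] H) : ℝ :=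
  sSup {r : ℝ | ∃ x y : H, ‖x‖ = 1 ∧ ‖y‖ = 1 ∧ ⟪x, y⟫ = (q : ℂ) ∧ r = ‖⟪A x, y⟫‖}

lemma mul_add_mul_le_one_add_div_two {q c s u : ℝ} (hqc : q ^ 2 + c ^ 2 = 1) (hc : 0 ≤ c)
    (hsu : s ^ 2 + u ^ 2 = 1) : u * (q * s + c * u) ≤ (1 + c) / 2 := by
  nlinarith [sq_nonneg ((1 + c) * s - q * u)]

/-- `(t, s)` is the unit vector of angle `θ = π/4 - φ/2`, where `q = cos φ`, and `(α, β)` is its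
rotation by `φ`. -/
lemma exists_unit_pair_inner_eq_of_sq_le_one {q : ℝ} (hq : q ^ 2 ≤ 1) :
    ∃ t s α β : ℝ, t ^ 2 + s ^ 2 = 1 ∧ α ^ 2 + β ^ 2 = 1 ∧ t * α + s * β = q ∧
      t * β = (1 + √(1 - q ^ 2)) / 2 := by
  set c := √(1 - q ^ 2)
  have hc : c ^ 2 = 1 - q ^ 2 := Real.sq_sqrt (by linarith)
  have hc0 : 0 ≤ c := Real.sqrt_nonneg _
  set t := √((1 + c) / 2)
  have ht : t ^ 2 = (1 + c) / 2 := Real.sq_sqrt (by linarith)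
  have ht0 : t ≠ 0 := by positivity
  set s := q / (2 * t)
  have hts : t * s = q / 2 := by simp only [s]; field_simp
  have hs : s ^ 2 = (1 - c) / 2 := by
    refine mul_left_cancel₀ (show (1 + c) / 2 ≠ 0 by positivity) ?_
    linear_combination (t * s + q / 2) * hts - s ^ 2 * ht + hc / 4
  refine ⟨t, s, q * t - c * s, q * s + c * t, by linarith, ?_, ?_, ?_⟩
  · linear_combination (q ^ 2 + c ^ 2) * (ht + hs) + hc
  · linear_combination q * (ht + hs)
  · linear_combination q * hts + c * ht + hc / 2

open scoped InnerProductSpace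

section InnerProductSpace

variable {𝕜 E : Type*} [RCLike 𝕜] [NormedAddCommGroup E] [InnerProductSpace 𝕜 E] {e₁ e₂ : E}

lemma inner_sub_inner_smul_self_eq_zero {x : E} (hx : ‖x‖ = 1) (z : E) :
    ⟪x, z - ⟪x, z⟫_𝕜 • x⟫_𝕜 = 0 := by
  rw [inner_sub_right, inner_smul_right, inner_self_eq_norm_sq_to_K, hx]
  simp

lemma norm_sub_inner_smul_self {x : E} (hx : ‖x‖ = 1) (z : E) :
    ‖z - ⟪x, z⟫_𝕜 • x‖ = √(‖z‖ ^ 2 - ‖⟪x, z⟫_𝕜‖ ^ 2) := by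
  have h := norm_add_sq_eq_norm_sq_add_norm_sq_of_inner_eq_zero (⟪x, z⟫_𝕜 • x)
    (z - ⟪x, z⟫_𝕜 • x) (by rw [inner_smul_left, inner_sub_inner_smul_self_eq_zero hx, mul_zero])
  rw [add_sub_cancel, norm_smul, hx, mul_one] at h
  rw [← Real.sqrt_sq (norm_nonneg (z - ⟪x, z⟫_𝕜 • x)), sq, sq, sq]
  congr 1
  linarith

lemma norm_inner_le_of_norm_eq_one {e x y : E} (he : ‖e‖ = 1) (hx : ‖x‖ = 1) (hy : ‖y‖ = 1) :
    ‖⟪e, y⟫_𝕜‖ ≤ ‖⟪x, y⟫_𝕜‖ * ‖⟪e, x⟫_𝕜‖ +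
      √(1 - ‖⟪x, y⟫_𝕜‖ ^ 2) * √(1 - ‖⟪e, x⟫_𝕜‖ ^ 2) := by
  set r := y - ⟪x, y⟫_𝕜 • x
  set f := e - ⟪x, e⟫_𝕜 • x
  have hdecomp : ⟪e, y⟫_𝕜 = ⟪x, y⟫_𝕜 * ⟪e, x⟫_𝕜 + ⟪f, r⟫_𝕜 := by
    simp only [f, r, inner_sub_left, inner_smul_left, inner_sub_inner_smul_self_eq_zero hx]
    rw [inner_sub_right, inner_smul_right]
    ring
  have hf : ‖f‖ = √(1 - ‖⟪e, x⟫_𝕜‖ ^ 2) := by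
    rw [norm_sub_inner_smul_self hx, he, one_pow, norm_inner_symm]
  have hr : ‖r‖ = √(1 - ‖⟪x, y⟫_𝕜‖ ^ 2) := by
    rw [norm_sub_inner_smul_self hx, hy, one_pow]
  calc ‖⟪e, y⟫_𝕜‖ ≤ ‖⟪x, y⟫_𝕜 * ⟪e, x⟫_𝕜‖ + ‖⟪f, r⟫_𝕜‖ := hdecomp ▸ norm_add_le _ _
    _ ≤ _ := by
      rw [norm_mul, ← hf, ← hr, mul_comm ‖r‖]
      gcongr
      exact norm_inner_le_norm f r

lemma Orthonormal.norm_inner_sq_add_norm_inner_sq_le (he : Orthonormal 𝕜 ![e₁, e₂]) (x : E) :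
    ‖⟪e₁, x⟫_𝕜‖ ^ 2 + ‖⟪e₂, x⟫_𝕜‖ ^ 2 ≤ ‖x‖ ^ 2 := by
  simpa [Fin.sum_univ_two] using he.sum_inner_products_le x (s := Finset.univ)

lemma Orthonormal.norm_inner_mul_norm_inner_le (he : Orthonormal 𝕜 ![e₁, e₂]) {x y : E}
    (hx : ‖x‖ = 1) (hy : ‖y‖ = 1) :
    ‖⟪e₁, x⟫_𝕜‖ * ‖⟪e₂, y⟫_𝕜‖ ≤ (1 + √(1 - ‖⟪x, y⟫_𝕜‖ ^ 2)) / 2 := by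
  set q := ‖⟪x, y⟫_𝕜‖
  set s := ‖⟪e₂, x⟫_𝕜‖
  have hq : q ^ 2 ≤ 1 :=
    pow_le_one₀ (norm_nonneg _) (by simpa [hx, hy] using norm_inner_le_norm (𝕜 := 𝕜) x y)
  have hbessel := he.norm_inner_sq_add_norm_inner_sq_le x
  rw [hx, one_pow] at hbessel
  have hs : s ^ 2 ≤ 1 := by linarith [sq_nonneg ‖⟪e₁, x⟫_𝕜‖]
  have he₁x : ‖⟪e₁, x⟫_𝕜‖ ≤ √(1 - s ^ 2) := Real.le_sqrt_of_sq_le (by linarith)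
  have he₂y : ‖⟪e₂, y⟫_𝕜‖ ≤ q * s + √(1 - q ^ 2) * √(1 - s ^ 2) :=
    norm_inner_le_of_norm_eq_one (he.norm_eq_one 1) hx hy
  calc ‖⟪e₁, x⟫_𝕜‖ * ‖⟪e₂, y⟫_𝕜‖ ≤ √(1 - s ^ 2) * (q * s + √(1 - q ^ 2) * √(1 - s ^ 2)) := by
        gcongr
    _ ≤ _ := by
      apply mul_add_mul_le_one_add_div_two _ (Real.sqrt_nonneg _)
      · rw [Real.sq_sqrt (by linarith)]; ring
      · rw [Real.sq_sqrt (by linarith)]; ring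

lemma Orthonormal.inner_pair_combination (he : Orthonormal 𝕜 ![e₁, e₂]) (t s α β : ℝ) :
    ⟪(t : 𝕜) • e₁ + (s : 𝕜) • e₂, (α : 𝕜) • e₁ + (β : 𝕜) • e₂⟫_𝕜 = ((t * α + s * β : ℝ) : 𝕜) := by
  simpa [Fin.sum_univ_two] using
    he.inner_sum (fun i ↦ ((![t, s] i : ℝ) : 𝕜)) (fun i ↦ ((![α, β] i : ℝ) : 𝕜)) Finset.univ

lemma Orthonormal.norm_pair_combination (he : Orthonormal 𝕜 ![e₁, e₂]) {t s : ℝ}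
    (hts : t ^ 2 + s ^ 2 = 1) :
    ‖(t : 𝕜) • e₁ + (s : 𝕜) • e₂‖ = 1 := by
  have h := he.inner_pair_combination t s t s
  rw [inner_self_eq_norm_sq_to_K, ← sq, ← sq, hts] at h
  exact (pow_eq_one_iff_of_nonneg (norm_nonneg _) two_ne_zero).1 (by exact_mod_cast h)

lemma Orthonormal.exists_norm_inner_mul_norm_inner_eq (he : Orthonormal 𝕜 ![e₁, e₂]) {q : ℝ}
    (hq : q ^ 2 ≤ 1) :
    ∃ x y : E, ‖x‖ = 1 ∧ ‖y‖ = 1 ∧ ⟪x, y⟫_𝕜 = q ∧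
      ‖⟪e₁, x⟫_𝕜‖ * ‖⟪e₂, y⟫_𝕜‖ = (1 + √(1 - q ^ 2)) / 2 := by
  obtain ⟨t, s, α, β, hts, hαβ, hinner, hval⟩ := exists_unit_pair_inner_eq_of_sq_le_one hq
  refine ⟨(t : 𝕜) • e₁ + (s : 𝕜) • e₂, (α : 𝕜) • e₁ + (β : 𝕜) • e₂,
    he.norm_pair_combination hts, he.norm_pair_combination hαβ,
    by rw [he.inner_pair_combination, hinner], ?_⟩
  have h₁ := he.inner_right_fintype (fun i ↦ ((![t, s] i : ℝ) : 𝕜)) 0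
  have h₂ := he.inner_right_fintype (fun i ↦ ((![α, β] i : ℝ) : 𝕜)) 1
  simp only [Fin.sum_univ_two, Matrix.cons_val_zero, Matrix.cons_val_one] at h₁ h₂
  rw [h₁, h₂, RCLike.norm_ofReal, RCLike.norm_ofReal, ← abs_mul, hval,
    abs_of_nonneg (by positivity)]

lemma exists_orthonormal_pair_norm_inner_eq {a b : E} (ha : a ≠ 0) (hb : b ≠ 0)
    (hab : ⟪a, b⟫_𝕜 = 0) :
    ∃ e₁ e₂ : E, Orthonormal 𝕜 ![e₁, e₂] ∧ (∀ x, ‖⟪a, x⟫_𝕜‖ = ‖a‖ * ‖⟪e₁, x⟫_𝕜‖) ∧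
      ∀ y, ‖⟪b, y⟫_𝕜‖ = ‖b‖ * ‖⟪e₂, y⟫_𝕜‖ := by
  have hscale : ∀ {v : E}, v ≠ 0 → ∀ x, ‖⟪v, x⟫_𝕜‖ = ‖v‖ * ‖⟪(‖v‖⁻¹ : 𝕜) • v, x⟫_𝕜‖ :=
    fun hv x ↦ by
      rw [inner_smul_left, norm_mul, RCLike.norm_conj, norm_inv, RCLike.norm_ofReal, abs_norm,
        mul_inv_cancel_left₀ (norm_ne_zero_iff.2 hv)]
  refine ⟨(‖a‖⁻¹ : 𝕜) • a, (‖b‖⁻¹ : 𝕜) • b, ?_, hscale ha, hscale hb⟩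
  simp [orthonormal_vecCons_iff, norm_smul_inv_norm, ha, hb, inner_smul_left, inner_smul_right, hab]

end InnerProductSpace

lemma norm_inner_rankOne_apply {H : Type*} [NormedAddCommGroup H] [InnerProductSpace ℂ H]
    (a b x y : H) : ‖⟪rankOne a b x, y⟫‖ = ‖⟪a, x⟫‖ * ‖⟪b, y⟫‖ := by
  simp [rankOne, norm_inner_symm x a, mul_comm]

theorem stmt4_general {H : Type*} [NormedAddCommGroup H] [InnerProductSpace ℂ H]
    (a b : H) (ha : a ≠ 0) (hb : b ≠ 0)
    (hab : ⟪a, b⟫ = 0) (q : ℝ) (hq : q ∈ Set.Icc (0 : ℝ) 1) :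
    qRad q (rankOne a b) = (1 + Real.sqrt (1 - q ^ 2)) / 2 * (‖a‖ * ‖b‖) := by
  obtain ⟨hq0, hq1⟩ := hq
  obtain ⟨e₁, e₂, he, ha', hb'⟩ := exists_orthonormal_pair_norm_inner_eq ha hb hab
  have hA : ∀ x y : H, ‖⟪rankOne a b x, y⟫‖ = ‖a‖ * ‖b‖ * (‖⟪e₁, x⟫‖ * ‖⟪e₂, y⟫‖) := fun x y ↦ by
    rw [norm_inner_rankOne_apply, ha', hb']
    ring
  refine IsGreatest.csSup_eq ⟨?_, ?_⟩
  · obtain ⟨x, y, hx, hy, hxy, hval⟩ :=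
      he.exists_norm_inner_mul_norm_inner_eq (q := q) (by nlinarith)
    exact ⟨x, y, hx, hy, hxy, by rw [hA, hval, mul_comm]⟩
  · rintro _ ⟨x, y, hx, hy, hxy, rfl⟩
    have hnorm : ‖⟪x, y⟫‖ = q := by rw [hxy, Complex.norm_real, Real.norm_of_nonneg hq0]
    have hbound := he.norm_inner_mul_norm_inner_le hx hy
    rw [hnorm] at hbound
    rw [hA, mul_comm _ (‖a‖ * ‖b‖)]
    gcongr

/-- The `q`-numerical radius of `a ⊗ b` for orthogonal `a`, `b`. -/
theorem stmt4 {H : Type*} [NormedAddCommGroup H] [InnerProductSpace ℂ H] [CompleteSpace H]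
    (hdim : 2 ≤ Module.rank ℂ H) (a b : H) (ha : a ≠ 0) (hb : b ≠ 0)
    (hab : ⟪a, b⟫ = 0) (q : ℝ) (hq : q ∈ Set.Icc (0 : ℝ) 1) :
    qRad q (rankOne a b) = (1 + Real.sqrt (1 - q ^ 2)) / 2 * (‖a‖ * ‖b‖) :=
  stmt4_general a b ha hb hab q hq
end

section
/- For all vectors a, b in H with b ≠ 0 and all q ∈ [0,1], the q-numerical radius of a⊗b satisfies ω_q(a⊗b) = (‖a‖·‖b‖ + q·|⟨a,b⟩|)/2 + (√(1−q²)/2)·‖b‖·(inf over λ ∈ ℂ of ‖a − λ·b‖). -/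
open scoped ComplexInnerProductSpace

/-!
Split `a = c • b + w` with `w ⊥ b`, so that `α = ‖c‖ ‖b‖ = |⟪a, b⟫| / ‖b‖` and
`δ = ‖w‖ = dist(a, ℂ b)`. For unit vectors `x, y` with `⟪x, y⟫ = q`, put `v = |⟪b, x⟫|` and
`s = √(‖b‖² - v²)`. Bessel's inequality for the orthogonal pairs `(b, w)` and `(x, y - q x)` gives
`‖b‖ |⟪x, a⟫| ≤ α v + δ s` and `|⟪b, y⟫| ≤ q v + √(1 - q²) s`, which reduces the bound to Buzano's
inequality in `ℝ²` for `u = (α, δ)`, `e = (q, √(1 - q²))` and `z = (v, s)`. Equality in the planar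
inequality holds along the bisector of `u` and `e`, and is realised in `H` by vectors in the plane
spanned by `b` and a unit vector orthogonal to `b` aligned with `w`; such a vector exists because
`dim H ≥ 2`.
-/

/-- Buzano's inequality `(u·z)(e·z) ≤ (‖u‖ + u·e) ‖z‖² / 2` in `ℝ²`, for `u = (α, δ)` of norm `r`,
a unit vector `e = (q, p)` and `z = (v, s)`. -/
lemma two_mul_mul_le_of_sq_eq {α δ q p r v s : ℝ} (hr : 0 ≤ r) (hr2 : r ^ 2 = α ^ 2 + δ ^ 2)
    (hqp : q ^ 2 + p ^ 2 = 1) :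
    2 * ((α * v + δ * s) * (q * v + p * s)) ≤ (r + q * α + p * δ) * (v ^ 2 + s ^ 2) := by
  -- `2 (u·z)(e·z) - (u·e) ‖z‖²` is the quadratic form of `[[-X, Y], [Y, X]]`, of eigenvalues `±r`.
  set X := δ * p - α * q
  set Y := α * p + δ * q
  have hXY : (r * (v ^ 2 + s ^ 2)) ^ 2 - (X * (v ^ 2 - s ^ 2) - 2 * Y * v * s) ^ 2
      = (2 * X * v * s + Y * (v ^ 2 - s ^ 2)) ^ 2 := by
    linear_combination (v ^ 2 + s ^ 2) ^ 2 * hr2 - ((α ^ 2 + δ ^ 2) * (v ^ 2 + s ^ 2) ^ 2) * hqp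
  have : -(X * (v ^ 2 - s ^ 2) - 2 * Y * v * s) ≤ r * (v ^ 2 + s ^ 2) := by
    nlinarith [sq_nonneg (2 * X * v * s + Y * (v ^ 2 - s ^ 2)),
      mul_nonneg hr (add_nonneg (sq_nonneg v) (sq_nonneg s))]
  linarith

/-- Equality holds in `two_mul_mul_le_of_sq_eq` for `z` along the bisector `u / r + e`. -/
lemma exists_two_mul_mul_eq {α δ q p r : ℝ} (hα : 0 ≤ α) (hδ : 0 ≤ δ) (hq : 0 ≤ q) (hp : 0 ≤ p)
    (hr : 0 ≤ r) (hr2 : r ^ 2 = α ^ 2 + δ ^ 2) (hqp : q ^ 2 + p ^ 2 = 1) :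
    ∃ v s : ℝ, 0 ≤ v ∧ 0 ≤ s ∧ v ^ 2 + s ^ 2 = 1 ∧
      2 * ((α * v + δ * s) * (q * v + p * s)) = r + q * α + p * δ := by
  rcases hr.eq_or_lt with rfl | hr
  · obtain ⟨rfl, rfl⟩ : α = 0 ∧ δ = 0 := by constructor <;> nlinarith
    exact ⟨q, p, hq, hp, hqp, by ring⟩
  have hK : 0 < 2 * r * (r + q * α + p * δ) := by positivity
  set t := √(2 * r * (r + q * α + p * δ))
  have ht : 0 < t := Real.sqrt_pos.mpr hK
  have ht2 : t ^ 2 = 2 * r * (r + q * α + p * δ) := Real.sq_sqrt hK.le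
  refine ⟨(α + q * r) / t, (δ + p * r) / t, by positivity, by positivity, ?_, ?_⟩
  · field_simp
    linear_combination -hr2 + r ^ 2 * hqp - ht2
  · field_simp
    linear_combination (-2 * (q * α + p * δ + r)) * hr2
      + (2 * r * (α ^ 2 + δ ^ 2 + r * (q * α + p * δ))) * hqp - (r + q * α + p * δ) * ht2

lemma Complex.exists_norm_eq_one_conj_mul_eq_norm (c : ℂ) :
    ∃ u : ℂ, ‖u‖ = 1 ∧ (starRingEnd ℂ) u * c = ‖c‖ := by
  obtain ⟨u, hu, hc⟩ : ∃ u : ℂ, ‖u‖ = 1 ∧ ‖c‖ * u = c :=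
    ⟨_, Complex.norm_exp_ofReal_mul_I _, Complex.norm_mul_exp_arg_mul_I c⟩
  refine ⟨u, hu, ?_⟩
  nth_rw 1 [← hc]
  rw [mul_left_comm, Complex.conj_mul', hu]
  simp

section InnerProductSpace

variable {H : Type*} [NormedAddCommGroup H] [InnerProductSpace ℂ H]

/-- `inner_self_eq_norm_sq_to_K` with the coercion `Complex.ofReal` instead of `RCLike.ofReal`,
which `Complex` lemmas and `push_cast` do not see through. -/
lemma inner_self_eq_norm_sq_ofReal (x : H) : ⟪x, x⟫ = (‖x‖ : ℂ) ^ 2 :=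
  inner_self_eq_norm_sq_to_K x

lemma inner_rankOne_apply (a b x y : H) : ⟪rankOne a b x, y⟫ = ⟪x, a⟫ * ⟪b, y⟫ := by
  simp only [rankOne, ContinuousLinearMap.smulRight_apply, innerSL_apply_apply, inner_smul_left,
    inner_conj_symm, mul_comm]

lemma exists_eq_smul_add_inner_eq_zero (a b : H) :
    ∃ (c : ℂ) (w : H), a = c • b + w ∧ ⟪b, w⟫ = 0 := by
  obtain ⟨c, hc⟩ := Submodule.mem_span_singleton.mp ((ℂ ∙ b).starProjection_apply_mem a)
  refine ⟨c, (ℂ ∙ b)ᗮ.starProjection a, ?_, ?_⟩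
  · rw [hc, Submodule.starProjection_add_starProjection_orthogonal]
  · exact Submodule.mem_orthogonal_singleton_iff_inner_right.mp
      ((ℂ ∙ b)ᗮ.starProjection_apply_mem a)

lemma norm_smul_add_sq {b w : H} (hbw : ⟪b, w⟫ = 0) (c : ℂ) :
    ‖c • b + w‖ ^ 2 = (‖c‖ * ‖b‖) ^ 2 + ‖w‖ ^ 2 := by
  rw [sq, sq, sq, norm_add_sq_eq_norm_sq_add_norm_sq_of_inner_eq_zero (𝕜 := ℂ), norm_smul]
  rw [inner_smul_left, hbw, mul_zero]

lemma norm_inner_smul_add_left {b w : H} (hbw : ⟪b, w⟫ = 0) (c : ℂ) :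
    ‖⟪c • b + w, b⟫‖ = ‖c‖ * ‖b‖ ^ 2 := by
  rw [inner_add_left, inner_smul_left, inner_eq_zero_symm.mp hbw, add_zero, norm_mul,
    Complex.norm_conj, inner_self_eq_norm_sq_ofReal, norm_pow, Complex.norm_real, norm_norm]

lemma iInf_norm_smul_add_sub_smul {b w : H} (hbw : ⟪b, w⟫ = 0) (c : ℂ) :
    ⨅ k : ℂ, ‖c • b + w - k • b‖ = ‖w‖ := by
  have hk (k : ℂ) : ‖c • b + w - k • b‖ ^ 2 = (‖c - k‖ * ‖b‖) ^ 2 + ‖w‖ ^ 2 := by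
    rw [← norm_smul_add_sq hbw (c - k)]
    congr 2
    module
  refine le_antisymm ?_ (le_ciInf fun k ↦ ?_)
  · exact (ciInf_le (f := fun k : ℂ ↦ ‖c • b + w - k • b‖) ⟨0, by rintro _ ⟨k, rfl⟩; positivity⟩
      c).trans_eq (by simp)
  · nlinarith [hk k, norm_nonneg (c • b + w - k • b), norm_nonneg w]

lemma norm_mul_norm_inner_le_of_inner_eq_zero {u w : H} (huw : ⟪u, w⟫ = 0) (z : H) :
    ‖u‖ * ‖⟪w, z⟫‖ ≤ ‖w‖ * √(‖u‖ ^ 2 * ‖z‖ ^ 2 - ‖⟪u, z⟫‖ ^ 2) := by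
  have hpyth := Submodule.norm_sq_eq_add_norm_sq_starProjection z (ℂ ∙ u)
  have hproj : ‖u‖ * ‖(ℂ ∙ u).starProjection z‖ = ‖⟪u, z⟫‖ := by
    rcases eq_or_ne u 0 with rfl | hu
    · simp
    have : 0 < ‖u‖ := norm_pos_iff.mpr hu
    rw [Submodule.starProjection_singleton, norm_smul, norm_div]
    simp only [RCLike.norm_ofReal, abs_of_nonneg (sq_nonneg ‖u‖)]
    field_simp
  have hwz : ⟪w, z⟫ = ⟪w, (ℂ ∙ u)ᗮ.starProjection z⟫ := by
    obtain ⟨c, hc⟩ := Submodule.mem_span_singleton.mp ((ℂ ∙ u).starProjection_apply_mem z)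
    rw [Submodule.starProjection_orthogonal_val, inner_sub_right, ← hc, inner_smul_right,
      inner_eq_zero_symm.mp huw, mul_zero, sub_zero]
  have hsqrt : ‖u‖ * ‖(ℂ ∙ u)ᗮ.starProjection z‖ = √(‖u‖ ^ 2 * ‖z‖ ^ 2 - ‖⟪u, z⟫‖ ^ 2) := by
    rw [← hproj, hpyth, eq_comm, Real.sqrt_eq_iff_eq_sq (by nlinarith) (by positivity)]
    ring
  calc ‖u‖ * ‖⟪w, z⟫‖ ≤ ‖u‖ * (‖w‖ * ‖(ℂ ∙ u)ᗮ.starProjection z‖) := by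
        rw [hwz]; gcongr; exact norm_inner_le_norm _ _
    _ = ‖w‖ * √(‖u‖ ^ 2 * ‖z‖ ^ 2 - ‖⟪u, z⟫‖ ^ 2) := by rw [← hsqrt]; ring

lemma inner_sub_smul_eq_zero_of_inner_eq {x y : H} {q : ℝ} (hx : ‖x‖ = 1) (hxy : ⟪x, y⟫ = q) :
    ⟪x, y - (q : ℂ) • x⟫ = 0 := by
  rw [inner_sub_right, inner_smul_right, inner_self_eq_norm_sq_ofReal, hx, hxy]
  simp

lemma norm_sub_smul_of_inner_eq {x y : H} {q : ℝ} (hx : ‖x‖ = 1) (hy : ‖y‖ = 1)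
    (hxy : ⟪x, y⟫ = q) : ‖y - (q : ℂ) • x‖ = √(1 - q ^ 2) := by
  have h := norm_add_sq_eq_norm_sq_add_norm_sq_of_inner_eq_zero ((q : ℂ) • x) (y - (q : ℂ) • x)
    (by rw [inner_smul_left, inner_sub_smul_eq_zero_of_inner_eq hx hxy, mul_zero])
  simp only [add_sub_cancel, hy, norm_smul, Complex.norm_real, hx, mul_one, Real.norm_eq_abs,
    abs_mul_abs_self] at h
  rw [← Real.sqrt_sq (norm_nonneg _)]
  congr 1
  linarith

lemma norm_inner_mul_norm_inner_le {b w x y : H} (hbw : ⟪b, w⟫ = 0) (c : ℂ) {q : ℝ}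
    (hq : 0 ≤ q) (hx : ‖x‖ = 1) (hy : ‖y‖ = 1) (hxy : ⟪x, y⟫ = q) :
    ‖⟪x, c • b + w⟫‖ * ‖⟪b, y⟫‖ ≤
      ‖b‖ * (‖c • b + w‖ + q * (‖c‖ * ‖b‖) + √(1 - q ^ 2) * ‖w‖) / 2 := by
  set v := ‖⟪b, x⟫‖
  set s := √(‖b‖ ^ 2 - v ^ 2)
  have hvb : v ≤ ‖b‖ := by simpa [hx] using norm_inner_le_norm (𝕜 := ℂ) b x
  have hvs : v ^ 2 + s ^ 2 = ‖b‖ ^ 2 := by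
    rw [Real.sq_sqrt (by nlinarith [norm_nonneg (⟪b, x⟫)])]
    ring
  have hxa : ‖⟪x, c • b + w⟫‖ * ‖b‖ ≤ (‖c‖ * ‖b‖) * v + ‖w‖ * s := by
    have hxw := norm_mul_norm_inner_le_of_inner_eq_zero hbw x
    rw [hx, one_pow, mul_one, norm_inner_symm] at hxw
    calc ‖⟪x, c • b + w⟫‖ * ‖b‖ ≤ (‖c‖ * v + ‖⟪x, w⟫‖) * ‖b‖ := by
          gcongr
          rw [inner_add_right, inner_smul_right]
          refine (norm_add_le _ _).trans ?_
          rw [norm_mul, norm_inner_symm]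
      _ ≤ (‖c‖ * ‖b‖) * v + ‖w‖ * s := by linarith
  have hby : ‖⟪b, y⟫‖ ≤ q * v + √(1 - q ^ 2) * s := by
    have hxy' := norm_mul_norm_inner_le_of_inner_eq_zero
      (inner_sub_smul_eq_zero_of_inner_eq hx hxy) b
    rw [hx, one_mul, one_pow, one_mul, norm_sub_smul_of_inner_eq hx hy hxy, norm_inner_symm x b,
      norm_inner_symm] at hxy'
    calc ‖⟪b, y⟫‖ = ‖(q : ℂ) * ⟪b, x⟫ + ⟪b, y - (q : ℂ) • x⟫‖ := by
          rw [inner_sub_right, inner_smul_right, add_sub_cancel]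
      _ ≤ q * v + √(1 - q ^ 2) * s := by
          refine (norm_add_le _ _).trans ?_
          rw [norm_mul, Complex.norm_real, Real.norm_of_nonneg hq]
          linarith
  have hq1 : q ≤ 1 := by
    simpa [hxy, hx, hy, abs_of_nonneg hq] using norm_inner_le_norm (𝕜 := ℂ) x y
  have hbuz := two_mul_mul_le_of_sq_eq (v := v) (s := s) (norm_nonneg (c • b + w))
    (norm_smul_add_sq hbw c) (show q ^ 2 + √(1 - q ^ 2) ^ 2 = 1 by
      rw [Real.sq_sqrt (by nlinarith)]; ring)
  rw [hvs] at hbuz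
  rcases (norm_nonneg b).eq_or_lt with hb | hb
  · simp [norm_eq_zero.mp hb.symm]
  refine le_of_mul_le_mul_right ?_ hb
  nlinarith [mul_le_mul hxa hby (norm_nonneg _) (by positivity)]

lemma exists_norm_eq_one_inner_eq_zero (hdim : 2 ≤ Module.rank ℂ H) (b : H) :
    ∃ e : H, ‖e‖ = 1 ∧ ⟪b, e⟫ = 0 := by
  have hspan : (ℂ ∙ b) ≠ ⊤ := by
    intro htop
    have := (rank_span_le (R := ℂ) {b}).trans_eq (Cardinal.mk_singleton b)
    rw [htop, rank_top] at this
    exact absurd (hdim.trans this) (by norm_num)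
  obtain ⟨v, hv, hv0⟩ := Submodule.ne_bot_iff _ |>.mp
    (mt Submodule.orthogonal_eq_bot_iff.mp hspan)
  refine ⟨(‖v‖⁻¹ : ℂ) • v, norm_smul_inv_norm hv0, ?_⟩
  rw [inner_smul_right, Submodule.mem_orthogonal_singleton_iff_inner_right.mp hv, mul_zero]

lemma exists_norm_eq_one_inner_eq_zero_inner_eq_norm (hdim : 2 ≤ Module.rank ℂ H) {b w : H}
    (hbw : ⟪b, w⟫ = 0) : ∃ e : H, ‖e‖ = 1 ∧ ⟪b, e⟫ = 0 ∧ ⟪e, w⟫ = ‖w‖ := by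
  rcases eq_or_ne w 0 with rfl | hw
  · simpa using exists_norm_eq_one_inner_eq_zero hdim b
  refine ⟨(‖w‖⁻¹ : ℂ) • w, norm_smul_inv_norm hw, ?_, ?_⟩
  · rw [inner_smul_right, hbw, mul_zero]
  · have : (‖w‖ : ℂ) ≠ 0 := by simpa using hw
    rw [inner_smul_left, inner_self_eq_norm_sq_ofReal, map_inv₀, Complex.conj_ofReal]
    field_simp

lemma exists_orthonormal_pair_inner_smul_add (hdim : 2 ≤ Module.rank ℂ H) {b w : H}
    (hb : b ≠ 0) (hbw : ⟪b, w⟫ = 0) (c : ℂ) :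
    ∃ f₁ f₂ : H, ‖f₁‖ = 1 ∧ ‖f₂‖ = 1 ∧ ⟪f₁, f₂⟫ = 0 ∧ ‖⟪b, f₁⟫‖ = ‖b‖ ∧ ⟪b, f₂⟫ = 0 ∧
      ⟪f₁, c • b + w⟫ = (‖c‖ * ‖b‖ : ℝ) ∧ ⟪f₂, c • b + w⟫ = ‖w‖ := by
  obtain ⟨f₂, hf₂, hbf₂, hf₂w⟩ := exists_norm_eq_one_inner_eq_zero_inner_eq_norm hdim hbw
  obtain ⟨u, hu, huc⟩ := Complex.exists_norm_eq_one_conj_mul_eq_norm c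
  have hb' : (‖b‖ : ℂ) ≠ 0 := by simpa using hb
  refine ⟨(u / ‖b‖) • b, f₂, ?_, hf₂, ?_, ?_, hbf₂, ?_, ?_⟩
  · rw [norm_smul, norm_div, hu, Complex.norm_real, norm_norm,
      div_mul_cancel₀ 1 (norm_ne_zero_iff.mpr hb)]
  · rw [inner_smul_left, hbf₂, mul_zero]
  · rw [inner_smul_right, inner_self_eq_norm_sq_ofReal, norm_mul, norm_div, hu]
    simp only [Complex.norm_real, norm_norm, norm_pow]
    field_simp
  · rw [inner_smul_left, inner_add_right, inner_smul_right, inner_self_eq_norm_sq_ofReal, hbw,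
      map_div₀, Complex.conj_ofReal]
    push_cast
    rw [← huc]
    field_simp
    ring
  · rw [inner_add_right, inner_smul_right, inner_eq_zero_symm.mp hbf₂, hf₂w, mul_zero, zero_add]

lemma inner_smul_add_smul_of_orthonormal {f₁ f₂ : H} (h₁ : ‖f₁‖ = 1) (h₂ : ‖f₂‖ = 1)
    (h₁₂ : ⟪f₁, f₂⟫ = 0) (s₁ s₂ t₁ t₂ : ℝ) :
    ⟪(s₁ : ℂ) • f₁ + (s₂ : ℂ) • f₂, (t₁ : ℂ) • f₁ + (t₂ : ℂ) • f₂⟫ = (s₁ * t₁ + s₂ * t₂ : ℝ) := by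
  simp only [inner_add_left, inner_add_right, inner_smul_left, inner_smul_right,
    inner_self_eq_norm_sq_ofReal, h₁, h₂, h₁₂, inner_eq_zero_symm.mp h₁₂, Complex.conj_ofReal]
  push_cast
  ring

lemma norm_smul_add_smul_of_orthonormal {f₁ f₂ : H} (h₁ : ‖f₁‖ = 1) (h₂ : ‖f₂‖ = 1)
    (h₁₂ : ⟪f₁, f₂⟫ = 0) {s₁ s₂ : ℝ} (hs : s₁ ^ 2 + s₂ ^ 2 = 1) :
    ‖(s₁ : ℂ) • f₁ + (s₂ : ℂ) • f₂‖ = 1 := by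
  have := inner_smul_add_smul_of_orthonormal h₁ h₂ h₁₂ s₁ s₂ s₁ s₂
  rw [inner_self_eq_norm_sq_ofReal] at this
  have hsq : ‖(s₁ : ℂ) • f₁ + (s₂ : ℂ) • f₂‖ ^ 2 = s₁ * s₁ + s₂ * s₂ := by exact_mod_cast this
  exact (pow_eq_one_iff_of_nonneg (norm_nonneg _) two_ne_zero).mp (by linarith)

/-- In the plane of `f₁ ∥ b` and `f₂ ⊥ b`, `x` takes the optimal coordinates of
`exists_two_mul_mul_eq` and `y = q x + √(1 - q²) x'` with `x' = S f₁ - C f₂ ⊥ x`. -/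
lemma exists_norm_inner_mul_norm_inner_eq (hdim : 2 ≤ Module.rank ℂ H) {b w : H} (hb : b ≠ 0)
    (hbw : ⟪b, w⟫ = 0) (c : ℂ) {q : ℝ} (hq₀ : 0 ≤ q) (hq₁ : q ≤ 1) :
    ∃ x y : H, ‖x‖ = 1 ∧ ‖y‖ = 1 ∧ ⟪x, y⟫ = q ∧ ‖⟪x, c • b + w⟫‖ * ‖⟪b, y⟫‖ =
      ‖b‖ * (‖c • b + w‖ + q * (‖c‖ * ‖b‖) + √(1 - q ^ 2) * ‖w‖) / 2 := by
  obtain ⟨f₁, f₂, hf₁, hf₂, hf₁₂, hbf₁, hbf₂, hf₁a, hf₂a⟩ :=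
    exists_orthonormal_pair_inner_smul_add hdim hb hbw c
  set p := √(1 - q ^ 2)
  have hqp : q ^ 2 + p ^ 2 = 1 := by rw [Real.sq_sqrt (by nlinarith)]; ring
  obtain ⟨C, S, hC, hS, hCS, hval⟩ := exists_two_mul_mul_eq (by positivity) (norm_nonneg w) hq₀
    (Real.sqrt_nonneg _) (norm_nonneg _) (norm_smul_add_sq hbw c) hqp
  refine ⟨(C : ℂ) • f₁ + (S : ℂ) • f₂,
    ((q * C + p * S : ℝ) : ℂ) • f₁ + ((q * S - p * C : ℝ) : ℂ) • f₂,
    norm_smul_add_smul_of_orthonormal hf₁ hf₂ hf₁₂ hCS,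
    norm_smul_add_smul_of_orthonormal hf₁ hf₂ hf₁₂
      (by linear_combination (C ^ 2 + S ^ 2) * hqp + hCS), ?_, ?_⟩
  · rw [inner_smul_add_smul_of_orthonormal hf₁ hf₂ hf₁₂]
    congr 1
    linear_combination q * hCS
  · have hxa : ⟪(C : ℂ) • f₁ + (S : ℂ) • f₂, c • b + w⟫ = (C * (‖c‖ * ‖b‖) + S * ‖w‖ : ℝ) := by
      rw [inner_add_left, inner_smul_left, inner_smul_left, hf₁a, hf₂a]
      simp
    have hby : ‖⟪b, ((q * C + p * S : ℝ) : ℂ) • f₁ + ((q * S - p * C : ℝ) : ℂ) • f₂⟫‖ =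
        (q * C + p * S) * ‖b‖ := by
      rw [inner_add_right, inner_smul_right, inner_smul_right, hbf₂, mul_zero, add_zero, norm_mul,
        hbf₁, Complex.norm_real, Real.norm_of_nonneg (by positivity)]
    rw [hxa, hby, Complex.norm_real, Real.norm_of_nonneg (by positivity)]
    linear_combination ‖b‖ / 2 * hval

end InnerProductSpace

theorem stmt13_general {H : Type*} [NormedAddCommGroup H] [InnerProductSpace ℂ H]
    (hdim : 2 ≤ Module.rank ℂ H) (a b : H) (hb : b ≠ 0)
    (q : ℝ) (hq : q ∈ Set.Icc (0 : ℝ) 1) :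
    qRad q (rankOne a b) =
      (‖a‖ * ‖b‖ + q * ‖⟪a, b⟫‖) / 2 +
        (Real.sqrt (1 - q ^ 2) / 2) * ‖b‖ * (⨅ c : ℂ, ‖a - c • b‖) := by
  obtain ⟨c, w, rfl, hbw⟩ := exists_eq_smul_add_inner_eq_zero a b
  have hmax : IsGreatest
      {r : ℝ | ∃ x y : H, ‖x‖ = 1 ∧ ‖y‖ = 1 ∧ ⟪x, y⟫ = (q : ℂ) ∧
        r = ‖⟪rankOne (c • b + w) b x, y⟫‖}
      (‖b‖ * (‖c • b + w‖ + q * (‖c‖ * ‖b‖) + √(1 - q ^ 2) * ‖w‖) / 2) := by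
    constructor
    · obtain ⟨x, y, hx, hy, hxy, hxy_eq⟩ :=
        exists_norm_inner_mul_norm_inner_eq hdim hb hbw c hq.1 hq.2
      exact ⟨x, y, hx, hy, hxy, by rw [inner_rankOne_apply, norm_mul, hxy_eq]⟩
    · rintro _ ⟨x, y, hx, hy, hxy, rfl⟩
      rw [inner_rankOne_apply, norm_mul]
      exact norm_inner_mul_norm_inner_le hbw c hq.1 hx hy hxy
  rw [qRad, hmax.csSup_eq, norm_inner_smul_add_left hbw, iInf_norm_smul_add_sub_smul hbw]
  ring

/-- The `q`-numerical radius of `a ⊗ b` expressed via the distance from `a` to the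
span of `b`. -/
theorem stmt13 {H : Type*} [NormedAddCommGroup H] [InnerProductSpace ℂ H] [CompleteSpace H]
    (hdim : 2 ≤ Module.rank ℂ H) (a b : H) (hb : b ≠ 0)
    (q : ℝ) (hq : q ∈ Set.Icc (0 : ℝ) 1) :
    qRad q (rankOne a b) =
      (‖a‖ * ‖b‖ + q * ‖⟪a, b⟫‖) / 2 +
        (Real.sqrt (1 - q ^ 2) / 2) * ‖b‖ * (⨅ c : ℂ, ‖a - c • b‖) :=
  stmt13_general hdim a b hb q hq
end

section
/- Let a, b ∈ H, let R > ‖a‖·‖b‖, and let (α_k)_{k≥0} be a sequence of complex numbers such that the power series Σ_{k=0}^∞ α_k λ^k converges for every complex λ with |λ| < R. Then the series f(a⊗b) = Σ_{k=0}^∞ α_k (a⊗b)^k converges in operator norm, and for every q ∈ [0,1], ω_q(f(a⊗b)) ≤ ω_q(a⊗b)·|Σ_{k=1}^∞ α_k·⟨b,a⟩^{k−1}| + q·|α₀|. -/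
open scoped ComplexInnerProductSpace

/-! Since `(a ⊗ b)² = ⟨b, a⟩ (a ⊗ b)`, every power `(a ⊗ b)^(k+1)` is `⟨b, a⟩^k (a ⊗ b)`, so the
series collapses to `f(a ⊗ b) = α₀ I + c (a ⊗ b)` with `c = Σ_{k ≥ 1} α_k ⟨b, a⟩^(k-1)`, which
converges because `|⟨b, a⟩| ≤ ‖a‖‖b‖ < R`. For unit vectors with `⟨x, y⟩ = q` this gives
`⟨f(a ⊗ b) x, y⟩ = ᾱ₀ q + c̄ ⟨(a ⊗ b) x, y⟩`, and the triangle inequality yields the bound. -/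

lemma Summable.coeff_succ_mul_pow {𝕜 : Type*} [NormedField 𝕜] {α : ℕ → 𝕜} {z : 𝕜}
    (h : Summable fun k => α k * z ^ k) : Summable fun k => α (k + 1) * z ^ k := by
  rcases eq_or_ne z 0 with rfl | hz
  · refine summable_of_ne_finset_zero (s := {0}) fun k hk => ?_
    simp [zero_pow (Finset.notMem_singleton.mp hk)]
  · have hshift := ((summable_nat_add_iff 1).2 h).mul_right z⁻¹
    refine hshift.congr fun k => ?_
    rw [pow_succ, ← mul_assoc, mul_assoc _ z, mul_inv_cancel₀ hz, mul_one]

section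

variable {𝕜 A : Type*} [CommSemiring 𝕜] [Semiring A] [Algebra 𝕜 A]

lemma pow_succ_eq_pow_smul_of_mul_self_eq_smul {T : A} {z : 𝕜} (hT : T * T = z • T) (k : ℕ) :
    T ^ (k + 1) = z ^ k • T := by
  induction k with
  | zero => simp
  | succ k ih => rw [pow_succ, ih, smul_mul_assoc, hT, smul_smul, ← pow_succ]

lemma hasSum_smul_pow_of_mul_self_eq_smul [TopologicalSpace 𝕜] [TopologicalSpace A]
    [ContinuousAdd A] [ContinuousSMul 𝕜 A] {T : A} {z : 𝕜} (hT : T * T = z • T) {α : ℕ → 𝕜}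
    {c : 𝕜} (hc : HasSum (fun k => α (k + 1) * z ^ k) c) :
    HasSum (fun k => α k • T ^ k) (α 0 • (1 : A) + c • T) := by
  have htail : HasSum (fun k => α (k + 1) • T ^ (k + 1)) (c • T) :=
    (hc.smul_const T).congr_fun fun k => by
      rw [pow_succ_eq_pow_smul_of_mul_self_eq_smul hT, smul_smul]
  simpa using HasSum.zero_add (f := fun k => α k • T ^ k) htail

end

lemma rankOne_mul_self {H : Type*} [NormedAddCommGroup H] [InnerProductSpace ℂ H] (a b : H) :
    rankOne a b * rankOne a b = ⟪a, b⟫ • rankOne a b := by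
  ext x
  simp [rankOne, smul_smul, mul_comm]

section QNumericalRadius

variable {H : Type*} [NormedAddCommGroup H] [InnerProductSpace ℂ H] {q : ℝ}

lemma norm_inner_apply_le_qRad (A : H →L[ℂ] H) {x y : H} (hx : ‖x‖ = 1) (hy : ‖y‖ = 1)
    (hxy : ⟪x, y⟫ = q) : ‖⟪A x, y⟫‖ ≤ qRad q A := by
  refine le_csSup ⟨‖A‖, ?_⟩ ⟨x, y, hx, hy, hxy, rfl⟩
  rintro r ⟨x, y, hx, hy, -, rfl⟩
  simpa [hx, hy] using (norm_inner_le_norm (A x) y).trans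
    (mul_le_mul_of_nonneg_right (A.le_opNorm x) (norm_nonneg y))

lemma qRad_le {A : H →L[ℂ] H} {C : ℝ} (hC : 0 ≤ C)
    (h : ∀ x y : H, ‖x‖ = 1 → ‖y‖ = 1 → ⟪x, y⟫ = q → ‖⟪A x, y⟫‖ ≤ C) : qRad q A ≤ C :=
  Real.sSup_le (fun _ ⟨x, y, hx, hy, hxy, hr⟩ => hr ▸ h x y hx hy hxy) hC

lemma qRad_nonneg (A : H →L[ℂ] H) : 0 ≤ qRad q A :=
  Real.sSup_nonneg fun _ ⟨_, _, _, _, _, hr⟩ => hr ▸ norm_nonneg _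

lemma qRad_smul_one_add_smul_le (hq : 0 ≤ q) (μ c : ℂ) (T : H →L[ℂ] H) :
    qRad q (μ • 1 + c • T) ≤ qRad q T * ‖c‖ + q * ‖μ‖ := by
  refine qRad_le (by positivity [qRad_nonneg (q := q) T]) fun x y hx hy hxy => ?_
  have hT := norm_inner_apply_le_qRad T hx hy hxy
  calc ‖⟪(μ • 1 + c • T) x, y⟫‖
      = ‖q * (starRingEnd ℂ) μ + ⟪T x, y⟫ * (starRingEnd ℂ) c‖ := by
        simp [hxy]
    _ ≤ q * ‖μ‖ + ‖⟪T x, y⟫‖ * ‖c‖ := by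
        refine (norm_add_le _ _).trans_eq ?_
        simp [abs_of_nonneg hq]
    _ ≤ q * ‖μ‖ + qRad q T * ‖c‖ := by gcongr
    _ = qRad q T * ‖c‖ + q * ‖μ‖ := add_comm _ _

end QNumericalRadius

theorem stmt14_general {H : Type*} [NormedAddCommGroup H] [InnerProductSpace ℂ H]
    (a b : H) (R : ℝ) (hR : ‖a‖ * ‖b‖ < R)
    (α : ℕ → ℂ) (hconv : ∀ z : ℂ, ‖z‖ < R → Summable (fun k : ℕ => α k * z ^ k)) :
    Summable (fun k : ℕ => α k • (rankOne a b) ^ k) ∧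
      ∀ q ∈ Set.Icc (0 : ℝ) 1,
        qRad q (∑' k : ℕ, α k • (rankOne a b) ^ k) ≤
          qRad q (rankOne a b) * ‖∑' k : ℕ, α (k + 1) * ⟪a, b⟫ ^ k‖ + q * ‖α 0‖ := by
  have hc := (hconv _ ((norm_inner_le_norm a b).trans_lt hR)).coeff_succ_mul_pow
  have hS := hasSum_smul_pow_of_mul_self_eq_smul (rankOne_mul_self a b) hc.hasSum
  refine ⟨hS.summable, fun q hq => ?_⟩
  rw [hS.tsum_eq]
  exact qRad_smul_one_add_smul_le hq.1 _ _ _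

/-- Bound on the `q`-numerical radius of an analytic function of a rank-one operator. -/
theorem stmt14 {H : Type*} [NormedAddCommGroup H] [InnerProductSpace ℂ H] [CompleteSpace H]
    (hdim : 2 ≤ Module.rank ℂ H) (a b : H) (R : ℝ) (hR : ‖a‖ * ‖b‖ < R)
    (α : ℕ → ℂ) (hconv : ∀ z : ℂ, ‖z‖ < R → Summable (fun k : ℕ => α k * z ^ k)) :
    Summable (fun k : ℕ => α k • (rankOne a b) ^ k) ∧
      ∀ q ∈ Set.Icc (0 : ℝ) 1,
        qRad q (∑' k : ℕ, α k • (rankOne a b) ^ k) ≤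
          qRad q (rankOne a b) * ‖∑' k : ℕ, α (k + 1) * ⟪a, b⟫ ^ k‖ + q * ‖α 0‖ :=
  stmt14_general a b R hR α hconv
end

section
/- For every bounded linear operator A on H and every q ∈ [0,1], the q-numerical radius satisfies ω_q(A) = sup{ q·|⟨Ay,y⟩| + √(1−q²)·|⟨At,y⟩| : y, t ∈ H, ‖y‖ = ‖t‖ = 1, ⟨t,y⟩ = 0 }. -/
open scoped ComplexInnerProductSpace

/-!
Every unit `x` with `⟪x, y⟫ = q` splits as `x = q y + √(1 - q²) t` with `t` a unit vector
orthogonal to `y`, so `⟪A x, y⟫ = q ⟪A y, y⟫ + √(1 - q²) ⟪A t, y⟫` and the triangle inequality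
bounds `|⟪A x, y⟫|` by an element of the right-hand set. Conversely, for orthonormal `y, t`,
rotating `t` by a unimodular phase makes the two terms point in the same direction, which turns
the triangle inequality into an equality; so the right-hand set is contained in the left-hand one.
-/

open ComplexConjugate

theorem Complex.exists_norm_eq_one_norm_add_mul_eq (c d : ℂ) :
    ∃ β : ℂ, ‖β‖ = 1 ∧ ‖c + β * d‖ = ‖c‖ + ‖d‖ := by
  refine ⟨exp ((c.arg - d.arg : ℝ) * I), norm_exp_ofReal_mul_I _, ?_⟩
  have hphase : exp ((c.arg - d.arg : ℝ) * I) * exp (d.arg * I) = exp (c.arg * I) := by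
    rw [← exp_add]; push_cast; ring_nf
  have h : c + exp ((c.arg - d.arg : ℝ) * I) * d = ((‖c‖ + ‖d‖ : ℝ) : ℂ) * exp (c.arg * I) := by
    calc c + exp ((c.arg - d.arg : ℝ) * I) * d
        = ‖c‖ * exp (c.arg * I) + ‖d‖ * (exp ((c.arg - d.arg : ℝ) * I) * exp (d.arg * I)) := by
          rw [norm_mul_exp_arg_mul_I]; nth_rw 2 [← norm_mul_exp_arg_mul_I d]; ring
      _ = _ := by rw [hphase]; push_cast; ring
  rw [h, norm_mul, norm_exp_ofReal_mul_I, Complex.norm_real, Real.norm_of_nonneg (by positivity),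
    mul_one]

section
variable {𝕜 E : Type*} [RCLike 𝕜] [NormedAddCommGroup E] [InnerProductSpace 𝕜 E]
local notation "⟪" x ", " y "⟫" => inner 𝕜 x y

theorem exists_norm_eq_one_inner_eq_zero_s17 (hdim : 2 ≤ Module.rank 𝕜 E) (y : E) :
    ∃ t : E, ‖t‖ = 1 ∧ ⟪t, y⟫ = 0 := by
  have hK : (𝕜 ∙ y)ᗮ ≠ ⊥ := by
    rw [Ne, Submodule.orthogonal_eq_bot_iff]
    intro h
    have h1 : Module.rank 𝕜 (𝕜 ∙ y) ≤ 1 := by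
      simpa using rank_span_le (R := 𝕜) ({y} : Set E)
    rw [h, rank_top] at h1
    exact absurd (hdim.trans h1) (by norm_num)
  obtain ⟨v, hv, hv0⟩ := Submodule.exists_mem_ne_zero_of_ne_bot hK
  refine ⟨(‖v‖⁻¹ : 𝕜) • v, norm_smul_inv_norm hv0, ?_⟩
  rw [inner_smul_left, Submodule.mem_orthogonal_singleton_iff_inner_left.mp hv, mul_zero]

theorem exists_norm_eq_one_inner_eq_zero_eq_norm_smul (hdim : 2 ≤ Module.rank 𝕜 E) {r y : E}
    (hry : ⟪r, y⟫ = 0) : ∃ t : E, ‖t‖ = 1 ∧ ⟪t, y⟫ = 0 ∧ r = (‖r‖ : 𝕜) • t := by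
  rcases eq_or_ne r 0 with rfl | hr
  · obtain ⟨t, ht, hty⟩ := exists_norm_eq_one_inner_eq_zero_s17 hdim y
    exact ⟨t, ht, hty, by simp⟩
  · refine ⟨(‖r‖⁻¹ : 𝕜) • r, norm_smul_inv_norm hr, by rw [inner_smul_left, hry, mul_zero], ?_⟩
    rw [smul_smul, ← RCLike.ofReal_inv, ← RCLike.ofReal_mul,
      mul_inv_cancel₀ (norm_ne_zero_iff.mpr hr), RCLike.ofReal_one, one_smul]

theorem inner_smul_add_smul_left_eq_conj {y t : E} (hy : ‖y‖ = 1) (hty : ⟪t, y⟫ = 0) (a b : 𝕜) :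
    ⟪a • y + b • t, y⟫ = conj a := by
  simp [inner_add_left, inner_smul_left, hty, inner_self_eq_norm_sq_to_K, hy]

theorem norm_smul_add_smul_sq_of_orthonormal {y t : E} (hy : ‖y‖ = 1) (ht : ‖t‖ = 1)
    (hty : ⟪t, y⟫ = 0) (a b : 𝕜) :
    ‖a • y + b • t‖ ^ 2 = ‖a‖ ^ 2 + ‖b‖ ^ 2 := by
  have hperp : ⟪a • y, b • t⟫ = 0 := by
    rw [inner_smul_left, inner_smul_right, inner_eq_zero_symm.mp hty, mul_zero, mul_zero]
  simp only [sq, norm_add_sq_eq_norm_sq_add_norm_sq_of_inner_eq_zero _ _ hperp, norm_smul, hy, ht,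
    mul_one]

theorem exists_eq_smul_add_sqrt_smul (hdim : 2 ≤ Module.rank 𝕜 E) {x y : E} (hx : ‖x‖ = 1)
    (hy : ‖y‖ = 1) {q : ℝ} (hxy : ⟪x, y⟫ = q) :
    ∃ t : E, ‖t‖ = 1 ∧ ⟪t, y⟫ = 0 ∧ x = (q : 𝕜) • y + (√(1 - q ^ 2) : 𝕜) • t := by
  set r := x - (q : 𝕜) • y
  have hry : ⟪r, y⟫ = 0 := by
    simp [r, inner_sub_left, inner_smul_left, hxy, inner_self_eq_norm_sq_to_K, hy]
  obtain ⟨t, ht, hty, hr⟩ := exists_norm_eq_one_inner_eq_zero_eq_norm_smul hdim hry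
  have hx' : x = (q : 𝕜) • y + (‖r‖ : 𝕜) • t := by rw [← hr, add_sub_cancel]
  have hpyth := norm_smul_add_smul_sq_of_orthonormal hy ht hty (q : 𝕜) (‖r‖ : 𝕜)
  rw [← hx', hx, RCLike.norm_ofReal, RCLike.norm_ofReal, abs_norm, sq_abs] at hpyth
  have hrn : ‖r‖ = √(1 - q ^ 2) := by
    rw [← Real.sqrt_sq (norm_nonneg r)]; congr 1; linarith
  exact ⟨t, ht, hty, hrn ▸ hx'⟩

theorem inner_apply_smul_add_smul_left (A : E →L[𝕜] E) (a b : 𝕜) (y t : E) :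
    ⟪A (a • y + b • t), y⟫ = conj a * ⟪A y, y⟫ + conj b * ⟪A t, y⟫ := by
  rw [map_add, map_smul, map_smul, inner_add_left, inner_smul_left, inner_smul_left]

theorem norm_inner_apply_le_opNorm (A : E →L[𝕜] E) {x y : E} (hx : ‖x‖ = 1) (hy : ‖y‖ = 1) :
    ‖⟪A x, y⟫‖ ≤ ‖A‖ :=
  calc ‖⟪A x, y⟫‖ ≤ ‖A x‖ * ‖y‖ := norm_inner_le_norm _ _
    _ ≤ ‖A‖ * ‖x‖ * ‖y‖ := by gcongr; exact A.le_opNorm x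
    _ = ‖A‖ := by rw [hx, hy, mul_one, mul_one]

theorem exists_norm_inner_apply_le (hdim : 2 ≤ Module.rank 𝕜 E) (A : E →L[𝕜] E) {x y : E}
    (hx : ‖x‖ = 1) (hy : ‖y‖ = 1) {q : ℝ} (hq : 0 ≤ q) (hxy : ⟪x, y⟫ = q) :
    ∃ t : E, ‖t‖ = 1 ∧ ⟪t, y⟫ = 0 ∧
      ‖⟪A x, y⟫‖ ≤ q * ‖⟪A y, y⟫‖ + √(1 - q ^ 2) * ‖⟪A t, y⟫‖ := by
  obtain ⟨t, ht, hty, rfl⟩ := exists_eq_smul_add_sqrt_smul hdim hx hy hxy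
  refine ⟨t, ht, hty, ?_⟩
  rw [inner_apply_smul_add_smul_left]
  refine (norm_add_le _ _).trans_eq ?_
  simp only [norm_mul, RCLike.norm_conj, RCLike.norm_ofReal, abs_of_nonneg hq,
    abs_of_nonneg (Real.sqrt_nonneg _)]

end

theorem exists_norm_inner_apply_eq {H : Type*} [NormedAddCommGroup H] [InnerProductSpace ℂ H]
    (A : H →L[ℂ] H) {y t : H} (hy : ‖y‖ = 1) (ht : ‖t‖ = 1) (hty : ⟪t, y⟫ = 0) {q : ℝ}
    (hq : q ∈ Set.Icc (0 : ℝ) 1) :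
    ∃ x : H, ‖x‖ = 1 ∧ ⟪x, y⟫ = q ∧
      ‖⟪A x, y⟫‖ = q * ‖⟪A y, y⟫‖ + √(1 - q ^ 2) * ‖⟪A t, y⟫‖ := by
  obtain ⟨β, hβ, hphase⟩ :=
    Complex.exists_norm_eq_one_norm_add_mul_eq (q * ⟪A y, y⟫) (√(1 - q ^ 2) * ⟪A t, y⟫)
  refine ⟨(q : ℂ) • y + (conj β * √(1 - q ^ 2)) • t, ?_, ?_, ?_⟩
  · have hnorm := norm_smul_add_smul_sq_of_orthonormal hy ht hty (q : ℂ) (conj β * √(1 - q ^ 2))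
    rw [norm_mul, Complex.norm_conj, hβ, one_mul, Complex.norm_real, Complex.norm_real,
      Real.norm_of_nonneg hq.1, Real.norm_of_nonneg (Real.sqrt_nonneg _),
      Real.sq_sqrt (by nlinarith [hq.1, hq.2]), add_sub_cancel] at hnorm
    exact (pow_eq_one_iff_of_nonneg (norm_nonneg _) two_ne_zero).mp hnorm
  · rw [inner_smul_add_smul_left_eq_conj hy hty, Complex.conj_ofReal]
  · rw [inner_apply_smul_add_smul_left, map_mul, Complex.conj_conj, Complex.conj_ofReal,
      Complex.conj_ofReal, mul_assoc, hphase, norm_mul, norm_mul, Complex.norm_real,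
      Complex.norm_real, Real.norm_of_nonneg hq.1, Real.norm_of_nonneg (Real.sqrt_nonneg _)]

theorem stmt17_general {H : Type*} [NormedAddCommGroup H] [InnerProductSpace ℂ H]
    (hdim : 2 ≤ Module.rank ℂ H) (A : H →L[ℂ] H) (q : ℝ) (hq : q ∈ Set.Icc (0 : ℝ) 1) :
    qRad q A =
      sSup {r : ℝ | ∃ y t : H, ‖y‖ = 1 ∧ ‖t‖ = 1 ∧ ⟪t, y⟫ = 0 ∧
        r = q * ‖⟪A y, y⟫‖ + Real.sqrt (1 - q ^ 2) * ‖⟪A t, y⟫‖} := by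
  set S := {r : ℝ | ∃ x y : H, ‖x‖ = 1 ∧ ‖y‖ = 1 ∧ ⟪x, y⟫ = (q : ℂ) ∧ r = ‖⟪A x, y⟫‖}
  set T := {r : ℝ | ∃ y t : H, ‖y‖ = 1 ∧ ‖t‖ = 1 ∧ ⟪t, y⟫ = 0 ∧
    r = q * ‖⟪A y, y⟫‖ + Real.sqrt (1 - q ^ 2) * ‖⟪A t, y⟫‖}
  have hS : BddAbove S := ⟨‖A‖, by
    rintro _ ⟨x, y, hx, hy, -, rfl⟩; exact norm_inner_apply_le_opNorm A hx hy⟩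
  have hTS : T ⊆ S := by
    rintro _ ⟨y, t, hy, ht, hty, rfl⟩
    obtain ⟨x, hx, hxy, hAx⟩ := exists_norm_inner_apply_eq A hy ht hty hq
    exact ⟨x, y, hx, hy, hxy, hAx.symm⟩
  obtain ⟨y, hy, -⟩ := exists_norm_eq_one_inner_eq_zero_s17 hdim (0 : H)
  obtain ⟨t, ht, hty⟩ := exists_norm_eq_one_inner_eq_zero_s17 hdim y
  have hT : T.Nonempty := ⟨_, y, t, hy, ht, hty, rfl⟩
  refine le_antisymm (csSup_le (hT.mono hTS) ?_) (csSup_le_csSup hS hT hTS)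
  rintro _ ⟨x, y, hx, hy, hxy, rfl⟩
  obtain ⟨t, ht, hty, hle⟩ := exists_norm_inner_apply_le hdim A hx hy hq.1 hxy
  exact hle.trans (le_csSup (hS.mono hTS) ⟨y, t, hy, ht, hty, rfl⟩)

/-- Reformulation of the `q`-numerical radius via orthonormal pairs. -/
theorem stmt17 {H : Type*} [NormedAddCommGroup H] [InnerProductSpace ℂ H] [CompleteSpace H]
    (hdim : 2 ≤ Module.rank ℂ H) (A : H →L[ℂ] H) (q : ℝ) (hq : q ∈ Set.Icc (0 : ℝ) 1) :
    qRad q A =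
      sSup {r : ℝ | ∃ y t : H, ‖y‖ = 1 ∧ ‖t‖ = 1 ∧ ⟪t, y⟫ = 0 ∧
        r = q * ‖⟪A y, y⟫‖ + Real.sqrt (1 - q ^ 2) * ‖⟪A t, y⟫‖} :=
  stmt17_general hdim A q hq
end
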